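/- Fix p ∈ (0, 1/2) and an integer Δ ≥ 1, and set α = (1 + (1 − 4p(1−p))^Δ)/2 and c = H_b(p)/log₂(1/α). For each n let X ∈ 𝔽₂ⁿ have i.i.d. coordinates with P(Xᵢ = 1) = p, and let Q be a random m(n) × n matrix over 𝔽₂ whose m(n) rows are i.i.d. and uniformly distributed over the set of vectors in 𝔽₂ⁿ of Hamming weight exactly Δ, independent of X, where m : ℕ → ℕ satisfies m(n)/n → c. Then for every sequence of decoding functions D_n (taking as input the realized matrix Q and the query answers QX ∈ 𝔽₂^{m(n)} and outputting a vector in 𝔽₂ⁿ), liminf_{n→∞} P(D_n(Q, QX) ≠ X) ≥ p · exp(−Δ·c) > 0; in particular, the average probability of error of this random query ensemble does not vanish as n → ∞. -/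

import Mathlib

open scoped Classical

/-- Binary entropy function (base 2). -/
noncomputable def Hb (p : ℝ) : ℝ := -(p * Real.logb 2 p) - (1 - p) * Real.logb 2 (1 - p)

/-- Probability of a vector of `n` i.i.d. `Ber(p)` labels over `𝔽₂`. -/
noncomputable def vecProb (p : ℝ) {n : ℕ} (x : Fin n → ZMod 2) : ℝ :=
  p ^ (hammingNorm x) * (1 - p) ^ (n - hammingNorm x)

/-- Probability of a single query row: uniform over vectors of Hamming weight exactly `Δ`. -/
noncomputable def rowProb (n Δ : ℕ) (v : Fin n → ZMod 2) : ℝ :=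
  if hammingNorm v = Δ then 1 / (n.choose Δ : ℝ) else 0

/-! Fix the first item. With probability `(C(n-1,Δ)/C(n,Δ))^m = (1 - Δ/n)^m → exp(-Δc)` no
query involves it; the answers then carry no information about `X₀` beyond the other labels, so
any decoder gets `X₀` wrong with conditional probability at least `min(p, 1 - p) = p`. -/

open Finset Filter Topology

lemma ZMod.eq_zero_or_eq_one (a : ZMod 2) : a = 0 ∨ a = 1 :=
  (em (a = 0)).imp_right (Fin.eq_one_of_ne_zero a)

lemma ZMod.sum_univ_two {M : Type*} [AddCommMonoid M] (f : ZMod 2 → M) : ∑ a, f a = f 0 + f 1 :=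
  Fin.sum_univ_two f

lemma Fin.sum_univ_pi_cons {β M : Type*} [Fintype β] [AddCommMonoid M] {n : ℕ}
    (f : (Fin (n + 1) → β) → M) : ∑ x, f x = ∑ a, ∑ y, f (Fin.cons a y) := by
  rw [← (Fin.consEquiv fun _ => β).sum_comp, Fintype.sum_prod_type]
  rfl

lemma hammingNorm_cons {β : Type*} [Zero β] [DecidableEq β] {n : ℕ} (a : β)
    (y : Fin n → β) :
    hammingNorm (Fin.cons a y : Fin (n + 1) → β) = hammingNorm y + if a = 0 then 0 else 1 := by
  simp only [hammingNorm, Fin.card_filter_univ_succ]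
  split_ifs <;> simp_all

lemma card_hammingNorm_eq {ι : Type*} [Fintype ι] [DecidableEq ι] (k : ℕ) :
    #{v : ι → ZMod 2 | hammingNorm v = k} = (Fintype.card ι).choose k := by
  rw [← card_univ, ← card_powersetCard]
  refine card_nbij' (fun v => ({i | v i ≠ 0} : Finset ι)) (fun s i => if i ∈ s then 1 else 0)
    ?_ ?_ ?_ ?_
  · intro v hv
    simpa [hammingNorm] using hv
  · intro s hs
    simp_all [hammingNorm]
  · intro v _
    funext i
    rcases ZMod.eq_zero_or_eq_one (v i) with h | h <;> simp [h]
  · intro s _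
    ext i
    by_cases h : i ∈ s <;> simp [h]

lemma choose_div_choose_succ {n Δ : ℕ} (h : Δ ≤ n + 1) :
    (n.choose Δ : ℝ) / (n + 1).choose Δ = 1 - Δ / (n + 1) := by
  have hmul := congrArg (Nat.cast : ℕ → ℝ) (Nat.choose_mul_succ_eq n Δ)
  push_cast [Nat.cast_sub h] at hmul
  have : ((n + 1).choose Δ : ℝ) ≠ 0 := by exact_mod_cast (Nat.choose_pos h).ne'
  field_simp
  linarith

lemma tendsto_one_add_div_pow_of_tendsto {m : ℕ → ℕ} {c : ℝ} (a : ℝ)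
    (hm : Tendsto (fun n => (m n : ℝ) / n) atTop (𝓝 c)) :
    Tendsto (fun n : ℕ => (1 + a / n) ^ m n) atTop (𝓝 (Real.exp (c * a))) := by
  have hlog : Tendsto (fun n : ℕ => (n : ℝ) * Real.log (1 + a / n)) atTop (𝓝 a) :=
    (Real.tendsto_mul_log_one_add_div_atTop a).comp tendsto_natCast_atTop_atTop
  have hpos : ∀ᶠ n : ℕ in atTop, 0 < 1 + a / n := by
    have : Tendsto (fun n : ℕ => 1 + a / n) atTop (𝓝 (1 + 0)) :=
      tendsto_const_nhds.add (tendsto_const_div_atTop_nhds_zero_nat a)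
    exact this.eventually (lt_mem_nhds (by norm_num))
  refine ((Real.continuous_exp.tendsto _).comp (hm.mul hlog)).congr' ?_
  filter_upwards [hpos, eventually_ne_atTop 0] with n hpos hn
  have hn : (n : ℝ) ≠ 0 := Nat.cast_ne_zero.2 hn
  rw [Function.comp_apply, ← mul_assoc, div_mul_cancel₀ _ hn, Real.exp_nat_mul,
    Real.exp_log hpos]

noncomputable def bitProb (p : ℝ) (a : ZMod 2) : ℝ := if a = 0 then 1 - p else p

lemma sum_bitProb (p : ℝ) : ∑ a, bitProb p a = 1 := by
  simp [ZMod.sum_univ_two, bitProb]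

lemma vecProb_eq_prod (p : ℝ) {n : ℕ} (x : Fin n → ZMod 2) :
    vecProb p x = ∏ k, bitProb p (x k) := by
  have hzero : #{k | x k = 0} = n - hammingNorm x := by
    have := card_filter_add_card_filter_not (s := univ) (fun k => x k = 0)
    rw [card_univ, Fintype.card_fin] at this
    simp only [hammingNorm, ne_eq]
    omega
  simp only [bitProb, prod_ite, prod_const, hzero]
  rw [vecProb, mul_comm]
  rfl

lemma vecProb_cons (p : ℝ) {n : ℕ} (a : ZMod 2) (y : Fin n → ZMod 2) :
    vecProb p (Fin.cons a y : Fin (n + 1) → ZMod 2) = bitProb p a * vecProb p y := by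
  simp only [vecProb_eq_prod, Fin.prod_univ_succ, Fin.cons_zero, Fin.cons_succ]

lemma sum_vecProb (p : ℝ) (n : ℕ) : ∑ x : Fin n → ZMod 2, vecProb p x = 1 := by
  simp only [vecProb_eq_prod, ← Fintype.sum_pow, sum_bitProb, one_pow]

lemma vecProb_nonneg {p : ℝ} (hp0 : 0 ≤ p) (hp1 : p ≤ 1) {n : ℕ} (x : Fin n → ZMod 2) :
    0 ≤ vecProb p x :=
  mul_nonneg (pow_nonneg hp0 _) (pow_nonneg (sub_nonneg.2 hp1) _)

lemma le_bitProb {p : ℝ} (hp : p ≤ 1 - p) (a : ZMod 2) : p ≤ bitProb p a := by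
  unfold bitProb
  split_ifs <;> linarith

lemma sum_bitProb_mul_ite_ne (p : ℝ) (b : ZMod 2) :
    ∑ a, bitProb p a * (if b ≠ a then 1 else 0) = bitProb p (b + 1) := by
  rcases ZMod.eq_zero_or_eq_one b with rfl | rfl <;>
    simp [ZMod.sum_univ_two, bitProb, CharTwo.add_self_eq_zero]

lemma rowProb_nonneg (n Δ : ℕ) (v : Fin n → ZMod 2) : 0 ≤ rowProb n Δ v := by
  unfold rowProb
  split_ifs <;> positivity

lemma sum_rowProb_le_one (n Δ : ℕ) : ∑ v, rowProb n Δ v ≤ 1 := by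
  simp only [rowProb]
  rw [← sum_filter, sum_const]
  simp only [card_hammingNorm_eq, Fintype.card_fin, nsmul_eq_mul, mul_one_div]
  exact div_self_le_one (n.choose Δ : ℝ)

lemma sum_rowProb_head_eq_zero (n Δ : ℕ) :
    ∑ v ∈ {v : Fin (n + 1) → ZMod 2 | v 0 = 0}, rowProb (n + 1) Δ v
      = (n.choose Δ : ℝ) / (n + 1).choose Δ := by
  rw [sum_filter, Fin.sum_univ_pi_cons, ZMod.sum_univ_two]
  simp only [Fin.cons_zero, rowProb, hammingNorm_cons]
  simp [← sum_filter, card_hammingNorm_eq, div_eq_mul_inv]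

lemma le_sum_vecProb_mul_ite_ne_head {p : ℝ} (hp0 : 0 ≤ p) (hp : p ≤ 1 - p) {n : ℕ}
    (g : (Fin n → ZMod 2) → ZMod 2) :
    p ≤ ∑ x : Fin (n + 1) → ZMod 2,
      vecProb p x * if g (Fin.tail x) ≠ x 0 then 1 else 0 := by
  rw [Fin.sum_univ_pi_cons, sum_comm]
  simp only [Fin.tail_cons, Fin.cons_zero, vecProb_cons]
  calc p = ∑ y : Fin n → ZMod 2, vecProb p y * p := by rw [← sum_mul, sum_vecProb, one_mul]
    _ ≤ ∑ y, vecProb p y * bitProb p (g y + 1) := by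
        refine sum_le_sum fun y _ => mul_le_mul_of_nonneg_left (le_bitProb hp _) ?_
        exact vecProb_nonneg hp0 (by linarith) y
    _ = ∑ y, ∑ a, bitProb p a * vecProb p y * if g y ≠ a then 1 else 0 := by
        refine sum_congr rfl fun y _ => ?_
        rw [← sum_bitProb_mul_ite_ne, mul_sum]
        exact sum_congr rfl fun a _ => by ring

lemma le_sum_vecProb_mul_ite_decode_ne {p : ℝ} (hp0 : 0 ≤ p) (hp : p ≤ 1 - p) {m n : ℕ}
    {q : Fin m → Fin (n + 1) → ZMod 2} (hq : ∀ i, q i 0 = 0)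
    (dec : (Fin m → ZMod 2) → Fin (n + 1) → ZMod 2) :
    p ≤ ∑ x, vecProb p x * if dec (fun i => ∑ j, q i j * x j) ≠ x then 1 else 0 := by
  have hans (x : Fin (n + 1) → ZMod 2) :
      (fun i => ∑ j, q i j * x j) = fun i => ∑ j, q i j.succ * Fin.tail x j := by
    funext i
    simp [Fin.sum_univ_succ, hq, Fin.tail]
  refine (le_sum_vecProb_mul_ite_ne_head hp0 hp
    fun y => dec (fun i => ∑ j, q i j.succ * y j) 0).trans (sum_le_sum fun x _ => ?_)
  refine mul_le_mul_of_nonneg_left ?_ (vecProb_nonneg hp0 (by linarith) x)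
  rw [hans x]
  split_ifs <;> simp_all

noncomputable def errorProb (p : ℝ) (Δ : ℕ) {m n : ℕ}
    (D : (Fin m → Fin n → ZMod 2) → (Fin m → ZMod 2) → Fin n → ZMod 2) : ℝ :=
  ∑ x : Fin n → ZMod 2, ∑ q : Fin m → Fin n → ZMod 2,
    (vecProb p x * ∏ i, rowProb n Δ (q i)) *
      if D q (fun i => ∑ j, q i j * x j) ≠ x then 1 else 0

lemma errorProb_le_one {p : ℝ} (hp0 : 0 ≤ p) (hp1 : p ≤ 1) (Δ : ℕ) {m n : ℕ}
    (D : (Fin m → Fin n → ZMod 2) → (Fin m → ZMod 2) → Fin n → ZMod 2) :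
    errorProb p Δ D ≤ 1 :=
  calc errorProb p Δ D
      ≤ ∑ x : Fin n → ZMod 2, ∑ q : Fin m → Fin n → ZMod 2,
          vecProb p x * ∏ i, rowProb n Δ (q i) := by
        refine sum_le_sum fun x _ => sum_le_sum fun q _ => mul_le_of_le_one_right ?_ ?_
        · exact mul_nonneg (vecProb_nonneg hp0 hp1 x)
            (prod_nonneg fun i _ => rowProb_nonneg n Δ _)
        · split_ifs <;> norm_num
    _ = (∑ v, rowProb n Δ v) ^ m := by
        rw [← sum_mul_sum, sum_vecProb, one_mul, Fintype.sum_pow (rowProb n Δ)]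
    _ ≤ 1 := pow_le_one₀ (sum_nonneg fun v _ => rowProb_nonneg n Δ v) (sum_rowProb_le_one n Δ)

lemma le_errorProb {p : ℝ} (hp0 : 0 ≤ p) (hp : p ≤ 1 - p) (Δ : ℕ) {m n : ℕ}
    (D : (Fin m → Fin (n + 1) → ZMod 2) → (Fin m → ZMod 2) → Fin (n + 1) → ZMod 2) :
    p * ((n.choose Δ : ℝ) / (n + 1).choose Δ) ^ m ≤ errorProb p Δ D := by
  set S : Finset (Fin (n + 1) → ZMod 2) := {v | v 0 = 0}
  have hp1 : p ≤ 1 := by linarith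
  calc p * ((n.choose Δ : ℝ) / (n + 1).choose Δ) ^ m
      = ∑ q ∈ Fintype.piFinset fun _ => S, (∏ i, rowProb (n + 1) Δ (q i)) * p := by
        rw [← sum_mul, ← prod_univ_sum (fun _ : Fin m => S) fun _ => rowProb (n + 1) Δ,
          prod_const, card_univ, Fintype.card_fin, sum_rowProb_head_eq_zero, mul_comm]
    _ ≤ ∑ q ∈ Fintype.piFinset fun _ => S, (∏ i, rowProb (n + 1) Δ (q i)) *
          ∑ x, vecProb p x * if D q (fun i => ∑ j, q i j * x j) ≠ x then 1 else 0 := by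
        refine sum_le_sum fun q hq => mul_le_mul_of_nonneg_left ?_
          (prod_nonneg fun i _ => rowProb_nonneg _ Δ _)
        refine le_sum_vecProb_mul_ite_decode_ne hp0 hp (fun i => ?_) (D q)
        simpa [S] using Fintype.mem_piFinset.1 hq i
    _ ≤ ∑ q, (∏ i, rowProb (n + 1) Δ (q i)) *
          ∑ x, vecProb p x * if D q (fun i => ∑ j, q i j * x j) ≠ x then 1 else 0 := by
        refine sum_le_sum_of_subset_of_nonneg (subset_univ _) fun q _ _ => mul_nonneg
          (prod_nonneg fun i _ => rowProb_nonneg _ Δ _) (sum_nonneg fun x _ => mul_nonneg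
            (vecProb_nonneg hp0 hp1 x) ?_)
        split_ifs <;> norm_num
    _ = errorProb p Δ D := by
        rw [errorProb, sum_comm]
        simp_rw [mul_sum]
        exact sum_congr rfl fun q _ => sum_congr rfl fun x _ => by ring

theorem stmt0_general (p : ℝ) (hp : p ∈ Set.Ioo (0 : ℝ) (1/2)) (Δ : ℕ)
    (c : ℝ)
    (m : ℕ → ℕ)
    (hm : Filter.Tendsto (fun n => (m n : ℝ) / n) Filter.atTop (nhds c))
    (D : ∀ n : ℕ, (Fin (m n) → Fin n → ZMod 2) → (Fin (m n) → ZMod 2) → (Fin n → ZMod 2)) :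
    p * Real.exp (-(Δ * c)) ≤
      Filter.liminf (fun n =>
        ∑ x : Fin n → ZMod 2, ∑ q : Fin (m n) → Fin n → ZMod 2,
          (vecProb p x * ∏ i, rowProb n Δ (q i)) *
            (if D n q (fun i => ∑ j, q i j * x j) ≠ x then 1 else 0)) Filter.atTop
    ∧ 0 < p * Real.exp (-(Δ * c)) := by
  obtain ⟨hp0, hp_half⟩ := hp
  have hp : p ≤ 1 - p := by linarith
  refine ⟨?_, by positivity⟩
  change _ ≤ liminf (fun n => errorProb p Δ (D n)) atTop
  have hlim : Tendsto (fun n : ℕ => p * (1 + -(Δ : ℝ) / n) ^ m n) atTop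
      (𝓝 (p * Real.exp (-(Δ * c)))) := by
    simpa [mul_comm c] using (tendsto_one_add_div_pow_of_tendsto (-(Δ : ℝ)) hm).const_mul p
  rw [← hlim.liminf_eq]
  refine liminf_le_liminf ?_ hlim.isBoundedUnder_ge
    (isCoboundedUnder_ge_of_le atTop fun n => errorProb_le_one hp0.le (by linarith) Δ (D n))
  filter_upwards [eventually_gt_atTop Δ] with n hn
  obtain ⟨n, rfl⟩ : ∃ k, n = k + 1 := ⟨n - 1, by omega⟩
  have hratio := choose_div_choose_succ (n := n) (Δ := Δ) (by omega)
  push_cast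
  rw [neg_div, ← sub_eq_add_neg, ← hratio]
  exact le_errorProb hp0.le hp Δ (D (n + 1))

/-- The average probability of error of the uniformly random weight-`Δ` XOR query ensemble
with `m(n) ≈ c·n` queries is bounded away from `0`: its liminf is at least `p·exp(−Δc) > 0`,
for every sequence of decoders. -/
theorem stmt0 (p : ℝ) (hp : p ∈ Set.Ioo (0 : ℝ) (1/2)) (Δ : ℕ) (hΔ : 1 ≤ Δ)
    (α c : ℝ)
    (hα : α = (1 + (1 - 4 * p * (1 - p)) ^ Δ) / 2)
    (hc : c = Hb p / Real.logb 2 (1 / α))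
    (m : ℕ → ℕ)
    (hm : Filter.Tendsto (fun n => (m n : ℝ) / n) Filter.atTop (nhds c))
    (D : ∀ n : ℕ, (Fin (m n) → Fin n → ZMod 2) → (Fin (m n) → ZMod 2) → (Fin n → ZMod 2)) :
    p * Real.exp (-(Δ * c)) ≤
      Filter.liminf (fun n =>
        ∑ x : Fin n → ZMod 2, ∑ q : Fin (m n) → Fin n → ZMod 2,
          (vecProb p x * ∏ i, rowProb n Δ (q i)) *
            (if D n q (fun i => ∑ j, q i j * x j) ≠ x then 1 else 0)) Filter.atTop
    ∧ 0 < p * Real.exp (-(Δ * c)) :=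
  stmt0_general p hp Δ c m hm D
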